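/- For dimension d ≥ 3, the function W(x) = (1 + |x|²/(d(d-2)))^((2-d)/2) on ℝ^d satisfies ΔW + W^((d+2)/(d-2)) = 0. -/

import Mathlib

open scoped BigOperators

/-- The Euclidean Laplacian of a function on `ℝ^d`, as the sum of second partial
derivatives in the coordinate directions. -/
noncomputable def laplacian {d : ℕ} (f : EuclideanSpace ℝ (Fin d) → ℝ)
    (x : EuclideanSpace ℝ (Fin d)) : ℝ :=
  ∑ i : Fin d,
    fderiv ℝ (fun y => fderiv ℝ f y (EuclideanSpace.single i (1 : ℝ))) x
      (EuclideanSpace.single i (1 : ℝ))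

section aux

variable {d : ℕ}

/-- The sum-of-squares function. -/
noncomputable def qfun (y : EuclideanSpace ℝ (Fin d)) : ℝ := ∑ j, y j ^ 2

/-- The derivative of `qfun`. -/
noncomputable def Dq (y : EuclideanSpace ℝ (Fin d)) :
    EuclideanSpace ℝ (Fin d) →L[ℝ] ℝ :=
  ∑ j, (2 * y j) • (EuclideanSpace.proj j : EuclideanSpace ℝ (Fin d) →L[ℝ] ℝ)

lemma qfun_nonneg (y : EuclideanSpace ℝ (Fin d)) : 0 ≤ qfun y :=
  Finset.sum_nonneg fun j _ => sq_nonneg _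

lemma norm_sq_eq_qfun (y : EuclideanSpace ℝ (Fin d)) : ‖y‖ ^ 2 = qfun y := by
  rw [EuclideanSpace.norm_eq, Real.sq_sqrt]
  · simp [qfun, sq_abs]
  · exact Finset.sum_nonneg fun j _ => sq_nonneg _

lemma hasFDerivAt_qfun (y : EuclideanSpace ℝ (Fin d)) :
    HasFDerivAt qfun (Dq y) y := by
  have h : HasFDerivAt (fun z : EuclideanSpace ℝ (Fin d) => ∑ j, z j * z j)
      (∑ j : Fin d, ((y j) • (EuclideanSpace.proj j : EuclideanSpace ℝ (Fin d) →L[ℝ] ℝ)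
        + (y j) • (EuclideanSpace.proj j : EuclideanSpace ℝ (Fin d) →L[ℝ] ℝ))) y :=
    HasFDerivAt.fun_sum fun j _ =>
      ((EuclideanSpace.proj j :
        EuclideanSpace ℝ (Fin d) →L[ℝ] ℝ).hasFDerivAt (x := y)).fun_mul
      ((EuclideanSpace.proj j :
        EuclideanSpace ℝ (Fin d) →L[ℝ] ℝ).hasFDerivAt (x := y))
  have heq : qfun (d := d) = fun z => ∑ j, z j * z j := by
    funext z; simp [qfun, sq]
  have heq2 : Dq y = ∑ j : Fin d,
      ((y j) • (EuclideanSpace.proj j : EuclideanSpace ℝ (Fin d) →L[ℝ] ℝ)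
        + (y j) • (EuclideanSpace.proj j : EuclideanSpace ℝ (Fin d) →L[ℝ] ℝ)) := by
    unfold Dq
    congr 1
    funext j
    rw [two_mul, add_smul]
  rw [heq, heq2]
  exact h

lemma Dq_apply_single (y : EuclideanSpace ℝ (Fin d)) (i : Fin d) :
    Dq y (EuclideanSpace.single i (1 : ℝ)) = 2 * y i := by
  simp only [Dq, ContinuousLinearMap.sum_apply, ContinuousLinearMap.smul_apply,
    PiLp.proj_apply, EuclideanSpace.single_apply, smul_eq_mul, mul_ite, mul_one, mul_zero]
  simp [Finset.sum_ite_eq]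

lemma hasFDerivAt_upow {c : ℝ} (hc : 0 < c) (r : ℝ) (y : EuclideanSpace ℝ (Fin d)) :
    HasFDerivAt (fun z : EuclideanSpace ℝ (Fin d) => (1 + qfun z / c) ^ r)
      ((r * (1 + qfun y / c) ^ (r - 1) / c) • Dq y) y := by
  have hu : 0 < 1 + qfun y / c := by
    have := div_nonneg (qfun_nonneg y) hc.le
    linarith
  have h1 : HasDerivAt (fun s : ℝ => 1 + s / c) (1 / c) (qfun y) :=
    ((hasDerivAt_id (qfun y)).div_const c).const_add 1
  have h2 : HasDerivAt (fun t : ℝ => t ^ r) (r * (1 + qfun y / c) ^ (r - 1))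
      (1 + qfun y / c) := Real.hasDerivAt_rpow_const (Or.inl hu.ne')
  have h3 : HasDerivAt (fun s : ℝ => (1 + s / c) ^ r)
      (r * (1 + qfun y / c) ^ (r - 1) * (1 / c)) (qfun y) := HasDerivAt.comp (h := fun s : ℝ => 1 + s / c) (qfun y) h2 h1
  have h4 := h3.comp_hasFDerivAt y (hasFDerivAt_qfun y)
  rw [show r * (1 + qfun y / c) ^ (r - 1) / c = r * (1 + qfun y / c) ^ (r - 1) * (1 / c) by ring]
  exact h4

end aux

/-- For `d ≥ 3`, the Aubin–Talenti profile `W(x) = (1 + |x|²/(d(d-2)))^((2-d)/2)`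
satisfies `ΔW + W^((d+2)/(d-2)) = 0`. -/
theorem ground_state_equation (d : ℕ) (hd : 3 ≤ d)
    (W : EuclideanSpace ℝ (Fin d) → ℝ)
    (hW : ∀ x, W x = (1 + ‖x‖ ^ 2 / ((d : ℝ) * ((d : ℝ) - 2))) ^ (((2 : ℝ) - (d : ℝ)) / 2)) :
    ∀ x, laplacian W x + W x ^ (((d : ℝ) + 2) / ((d : ℝ) - 2)) = 0 := by
  intro x
  have hd3 : (3 : ℝ) ≤ (d : ℝ) := by exact_mod_cast hd
  set c : ℝ := (d : ℝ) * ((d : ℝ) - 2) with hc_def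
  set p : ℝ := ((2 : ℝ) - (d : ℝ)) / 2 with hp_def
  have hdne : (d : ℝ) ≠ 0 := by linarith
  have hd2 : (d : ℝ) - 2 ≠ 0 := by linarith
  have hc : 0 < c := by
    have : (0:ℝ) < (d : ℝ) := by linarith
    have : (0:ℝ) < (d : ℝ) - 2 := by linarith
    positivity
  have hWq : W = fun y => (1 + qfun y / c) ^ p := by
    funext y
    rw [hW y, norm_sq_eq_qfun]
  have hu : ∀ y : EuclideanSpace ℝ (Fin d), 0 < 1 + qfun y / c := by
    intro y
    have := div_nonneg (qfun_nonneg y) hc.le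
    linarith
  -- first derivative of W
  have hWd : ∀ y : EuclideanSpace ℝ (Fin d),
      HasFDerivAt W ((p * (1 + qfun y / c) ^ (p - 1) / c) • Dq y) y := by
    intro y
    rw [hWq]
    exact hasFDerivAt_upow hc p y
  have hfW : ∀ y : EuclideanSpace ℝ (Fin d), ∀ i : Fin d,
      fderiv ℝ W y (EuclideanSpace.single i (1 : ℝ))
        = p * (1 + qfun y / c) ^ (p - 1) / c * (2 * y i) := by
    intro y i
    rw [(hWd y).fderiv]
    simp [Dq_apply_single]
  -- second derivative in each direction
  set u : ℝ := 1 + qfun x / c with hu_def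
  have hupos : 0 < u := hu x
  have hsecond : ∀ i : Fin d,
      fderiv ℝ (fun y => fderiv ℝ W y (EuclideanSpace.single i (1 : ℝ))) x
        (EuclideanSpace.single i (1 : ℝ))
      = p * u ^ (p - 1) / c * 2
        + 2 * x i * ((p / c) * ((p - 1) * u ^ (p - 2) / c) * (2 * x i)) := by
    intro i
    have hfun : (fun y => fderiv ℝ W y (EuclideanSpace.single i (1 : ℝ)))
        = fun y => (p / c) * (1 + qfun y / c) ^ (p - 1) * (2 * y i) := by
      funext y
      rw [hfW y i]
      ring
    rw [hfun]
    -- differentiate the product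
    have h1 : HasFDerivAt (fun y : EuclideanSpace ℝ (Fin d) =>
        (p / c) * (1 + qfun y / c) ^ (p - 1))
        ((p / c) • (((p - 1) * (1 + qfun x / c) ^ (p - 1 - 1) / c) • Dq x)) x :=
      (hasFDerivAt_upow hc (p - 1) x).const_mul (p / c)
    have h2 : HasFDerivAt (fun y : EuclideanSpace ℝ (Fin d) => 2 * y i)
        ((2 : ℝ) • (EuclideanSpace.proj i : EuclideanSpace ℝ (Fin d) →L[ℝ] ℝ)) x := by
      exact ((EuclideanSpace.proj i :
        EuclideanSpace ℝ (Fin d) →L[ℝ] ℝ).hasFDerivAt (x := x)).const_mul 2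
    have h3 := h1.fun_mul h2
    rw [h3.fderiv]
    simp only [ContinuousLinearMap.add_apply, ContinuousLinearMap.smul_apply,
      PiLp.proj_apply, Dq_apply_single, smul_eq_mul, EuclideanSpace.single_apply, eq_self_iff_true, if_true]
    have h5 : p - 1 - 1 = p - 2 := by ring
    rw [h5]
    ring
  -- sum up
  have hlap : laplacian W x
      = (d : ℝ) * (p * u ^ (p - 1) / c * 2)
        + 4 * (p * (p - 1)) / c / c * u ^ (p - 2) * qfun x := by
    unfold laplacian
    rw [Finset.sum_congr rfl fun i _ => hsecond i]
    rw [Finset.sum_add_distrib, Finset.sum_const, Finset.card_univ,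
      Fintype.card_fin, nsmul_eq_mul]
    congr 1
    have : ∀ i : Fin d, 2 * x i * ((p / c) * ((p - 1) * u ^ (p - 2) / c) * (2 * x i))
        = 4 * (p * (p - 1)) / c / c * u ^ (p - 2) * x i ^ 2 := by
      intro i; ring
    rw [Finset.sum_congr rfl fun i _ => this i, ← Finset.mul_sum]
    rfl
  -- the nonlinear term
  have hWx : W x = u ^ p := by rw [hWq]
  have hps : p * (((d : ℝ) + 2) / ((d : ℝ) - 2)) = p - 2 := by
    rw [hp_def]
    field_simp
    ring
  have hWpow : W x ^ (((d : ℝ) + 2) / ((d : ℝ) - 2)) = u ^ (p - 2) := by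
    rw [hWx, ← Real.rpow_mul hupos.le, hps]
  -- final algebra
  have hq_eq : qfun x = c * (u - 1) := by
    rw [hu_def]
    field_simp
    ring
  have hup1 : u ^ (p - 1) = u ^ (p - 2) * u := by
    rw [show p - 1 = p - 2 + 1 by ring, Real.rpow_add hupos, Real.rpow_one]
  rw [hlap, hWpow, hq_eq, hup1]
  set v : ℝ := u ^ (p - 2)
  rw [hp_def, hc_def]
  field_simp
  ring
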